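/- The Gumbel-Max trick: if g_1, ..., g_K are i.i.d. standard Gumbel random variables (CDF F(x) = exp(−exp(−x))) and p ∈ ℝ^K is a probability vector with all p_k > 0, then the probability that log p_k + g_k is the unique maximum of {log p_i + g_i}_{i=1}^K equals p_k. -/

import Mathlib

/-!
Conditionally on `g k = x`, the event is that `g i < x + log p k - log p i` for all `i ≠ k`,
which has probability `∏ i ≠ k, exp (-(p i / p k) e^{-x}) = exp (-((1 - p k) / p k) e^{-x})`.
Averaging over the Gumbel density `e^{-x} exp (-e^{-x})` leaves
`∫ e^{-x} exp (-e^{-x} / p k) dx = p k`, since `a e^{-x} exp (-a e^{-x})` is the derivative of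
`exp (-a e^{-x})`, which increases from `0` to `1`.
-/

open MeasureTheory

/-- The standard Gumbel distribution, as a measure on `ℝ` with Lebesgue
density `e^(−x) · exp(−e^(−x))`. -/
noncomputable def stdGumbel : Measure ℝ :=
  volume.withDensity
    (fun x => ENNReal.ofReal (Real.exp (-x) * Real.exp (-Real.exp (-x))))

open Set Filter Topology Real

section FTC

variable {g g' : ℝ → ℝ} {m n : ℝ}

theorem integrable_deriv_of_nonneg (hderiv : ∀ x, HasDerivAt g (g' x) x) (hpos : ∀ x, 0 ≤ g' x)
    (hbot : Tendsto g atBot (𝓝 m)) (htop : Tendsto g atTop (𝓝 n)) : Integrable g' := by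
  have hcont : Continuous g := continuous_iff_continuousAt.2 fun x => (hderiv x).continuousAt
  have hint : ∀ a b, IntervalIntegrable g' volume a b := fun a b =>
    intervalIntegral.intervalIntegrable_deriv_of_nonneg hcont.continuousOn
      (fun x _ => hderiv x) (fun x _ => hpos x)
  refine integrable_of_intervalIntegral_norm_tendsto (n - m)
    (fun i => (hint (-i) i).1) tendsto_neg_atTop_atBot tendsto_id ?_
  have hFTC (i : ℝ) : ∫ x in -i..i, ‖g' x‖ = g i - g (-i) := by
    simp_rw [Real.norm_of_nonneg (hpos _)]
    exact intervalIntegral.integral_eq_sub_of_hasDerivAt (fun x _ => hderiv x) (hint _ _)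
  exact (htop.sub (hbot.comp tendsto_neg_atTop_atBot)).congr fun i => (hFTC i).symm

theorem lintegral_ofReal_deriv_of_nonneg (hderiv : ∀ x, HasDerivAt g (g' x) x)
    (hpos : ∀ x, 0 ≤ g' x) (hbot : Tendsto g atBot (𝓝 m)) (htop : Tendsto g atTop (𝓝 n)) :
    ∫⁻ x, ENNReal.ofReal (g' x) = ENNReal.ofReal (n - m) := by
  have hint := integrable_deriv_of_nonneg hderiv hpos hbot htop
  rw [← ofReal_integral_eq_lintegral_ofReal hint (ae_of_all _ hpos),
    integral_of_hasDerivAt_of_tendsto hderiv hint hbot htop]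

theorem setLIntegral_Iio_ofReal_deriv_of_nonneg (hderiv : ∀ x, HasDerivAt g (g' x) x)
    (hpos : ∀ x, 0 ≤ g' x) (hbot : Tendsto g atBot (𝓝 m)) (htop : Tendsto g atTop (𝓝 n))
    (t : ℝ) : ∫⁻ x in Iio t, ENNReal.ofReal (g' x) = ENNReal.ofReal (g t - m) := by
  have hint := (integrable_deriv_of_nonneg hderiv hpos hbot htop).integrableOn (s := Iic t)
  rw [Measure.restrict_congr_set Iio_ae_eq_Iic,
    ← ofReal_integral_eq_lintegral_ofReal hint (ae_of_all _ hpos),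
    integral_Iic_of_hasDerivAt_of_tendsto' (fun x _ => hderiv x) hint hbot]

end FTC

theorem hasDerivAt_exp_neg_mul_exp_neg (a x : ℝ) :
    HasDerivAt (fun x => exp (-(a * exp (-x)))) (a * exp (-x) * exp (-(a * exp (-x)))) x := by
  have h : HasDerivAt (fun x => -(a * exp (-x))) (a * exp (-x)) x :=
    ((hasDerivAt_neg x).exp.const_mul a).fun_neg.congr_deriv (by ring)
  simpa only [mul_comm] using h.exp

theorem tendsto_exp_neg_mul_exp_neg_atTop (a : ℝ) :
    Tendsto (fun x => exp (-(a * exp (-x)))) atTop (𝓝 1) := by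
  have h : Tendsto (fun x => a * exp (-x)) atTop (𝓝 (a * 0)) :=
    (tendsto_exp_neg_atTop_nhds_zero).const_mul a
  simpa [Function.comp_def] using (continuous_exp.tendsto _).comp h.neg

theorem tendsto_exp_neg_mul_exp_neg_atBot {a : ℝ} (ha : 0 < a) :
    Tendsto (fun x => exp (-(a * exp (-x)))) atBot (𝓝 0) :=
  tendsto_exp_atBot.comp <| tendsto_neg_atTop_atBot.comp <|
    (tendsto_exp_atTop.comp tendsto_neg_atBot_atTop).const_mul_atTop ha


theorem pi_setOf_forall_ne_add_lt_add {n : ℕ} (μ : Fin (n + 1) → Measure ℝ)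
    [∀ i, SigmaFinite (μ i)] (k : Fin (n + 1)) (c : Fin (n + 1) → ℝ) :
    Measure.pi μ {g | ∀ i, i ≠ k → c i + g i < c k + g k} =
      ∫⁻ x, ∏ j, μ (k.succAbove j) (Iio (x + c k - c (k.succAbove j))) ∂μ k := by
  set T : Set (ℝ × (Fin n → ℝ)) := {q | ∀ j, c (k.succAbove j) + q.2 j < c k + q.1}
  have hT : MeasurableSet T := by
    simp only [T, ofPred_forall]
    exact .iInter fun j => measurableSet_lt (by fun_prop) (by fun_prop)
  have hpre : {g : Fin (n + 1) → ℝ | ∀ i, i ≠ k → c i + g i < c k + g k} =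
      MeasurableEquiv.piFinSuccAbove (fun _ => ℝ) k ⁻¹' T := by
    ext g
    simp [T, Fin.forall_iff_succAbove k, Fin.succAbove_ne, Fin.removeNth_apply]
  rw [hpre, (measurePreserving_piFinSuccAbove μ k).measure_preimage hT.nullMeasurableSet,
    Measure.prod_apply hT]
  refine lintegral_congr fun x => ?_
  rw [← Measure.pi_pi]
  congr 1
  ext y
  simp only [T, mem_preimage, mem_ofPred_eq, Set.mem_pi, mem_univ, mem_Iio, forall_const]
  exact forall_congr' fun j => by constructor <;> intro h <;> linarith

theorem lintegral_mul_exp_neg_mul_exp_neg {a : ℝ} (ha : 0 < a) :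
    ∫⁻ x, ENNReal.ofReal (a * exp (-x) * exp (-(a * exp (-x)))) = 1 := by
  rw [lintegral_ofReal_deriv_of_nonneg (hasDerivAt_exp_neg_mul_exp_neg a)
    (fun x => by positivity) (tendsto_exp_neg_mul_exp_neg_atBot ha)
    (tendsto_exp_neg_mul_exp_neg_atTop a)]
  simp

instance : IsProbabilityMeasure stdGumbel where
  measure_univ := by
    simpa [stdGumbel] using lintegral_mul_exp_neg_mul_exp_neg one_pos

theorem stdGumbel_Iio (t : ℝ) : stdGumbel (Iio t) = ENNReal.ofReal (exp (-exp (-t))) := by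
  have h := setLIntegral_Iio_ofReal_deriv_of_nonneg (hasDerivAt_exp_neg_mul_exp_neg 1)
    (fun x => by positivity) (tendsto_exp_neg_mul_exp_neg_atBot one_pos)
    (tendsto_exp_neg_mul_exp_neg_atTop 1) t
  simpa [stdGumbel, withDensity_apply _ measurableSet_Iio] using h

theorem lintegral_exp_neg_mul_exp_neg_stdGumbel {b : ℝ} (hb : -1 < b) :
    ∫⁻ x, ENNReal.ofReal (exp (-(b * exp (-x)))) ∂stdGumbel = ENNReal.ofReal (1 + b)⁻¹ := by
  have hb' : 0 < 1 + b := by linarith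
  have hdens (x : ℝ) : exp (-x) * exp (-exp (-x)) * exp (-(b * exp (-x))) =
      (1 + b)⁻¹ * ((1 + b) * exp (-x) * exp (-((1 + b) * exp (-x)))) := by
    rw [mul_assoc, ← exp_add, mul_assoc (1 + b), inv_mul_cancel_left₀ hb'.ne']
    congr 2
    ring
  rw [stdGumbel, lintegral_withDensity_eq_lintegral_mul _ (by fun_prop) (by fun_prop)]
  calc ∫⁻ x, ENNReal.ofReal (exp (-x) * exp (-exp (-x))) * ENNReal.ofReal (exp (-(b * exp (-x))))
      = ∫⁻ x, ENNReal.ofReal (1 + b)⁻¹ *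
          ENNReal.ofReal ((1 + b) * exp (-x) * exp (-((1 + b) * exp (-x)))) := by
        refine lintegral_congr fun x => ?_
        rw [← ENNReal.ofReal_mul (by positivity), hdens, ENNReal.ofReal_mul (by positivity)]
    _ = ENNReal.ofReal (1 + b)⁻¹ := by
        rw [lintegral_const_mul _ (by fun_prop), lintegral_mul_exp_neg_mul_exp_neg hb', mul_one]

theorem exp_neg_add_log_sub_log {a b : ℝ} (ha : 0 < a) (hb : 0 < b) (x : ℝ) :
    exp (-(x + log a - log b)) = b / a * exp (-x) := by
  rw [add_sub_assoc, neg_add, exp_add, exp_neg (log a - log b), exp_sub, exp_log ha, exp_log hb]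
  field_simp

theorem prod_exp_neg_exp_neg_add_log_sub_log {ι : Type*} (s : Finset ι) {a : ℝ} {b : ι → ℝ}
    (ha : 0 < a) (hb : ∀ i ∈ s, 0 < b i) (x : ℝ) :
    ∏ i ∈ s, exp (-exp (-(x + log a - log (b i)))) =
      exp (-((∑ i ∈ s, b i) / a * exp (-x))) := by
  rw [← exp_sum, Finset.sum_div, Finset.sum_mul, ← Finset.sum_neg_distrib]
  exact congrArg exp <| Finset.sum_congr rfl fun i hi => by
    rw [exp_neg_add_log_sub_log ha (hb i hi)]

/-- The Gumbel-Max trick: with i.i.d. standard Gumbel noise `g_i`, the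
probability that `log p_k + g_k` is the unique maximum of the perturbed
log-probabilities equals `p_k`. -/
theorem gumbel_max_trick (K : ℕ) (p : Fin K → ℝ)
    (hp : ∀ i, 0 < p i) (hsum : ∑ i, p i = 1) (k : Fin K) :
    (Measure.pi fun _ : Fin K => stdGumbel)
      {g | ∀ i, i ≠ k → Real.log (p i) + g i < Real.log (p k) + g k}
      = ENNReal.ofReal (p k) := by
  obtain ⟨n, rfl⟩ := Nat.exists_eq_add_one_of_ne_zero k.pos.ne'
  have hpk := hp k
  have hrest : ∑ j, p (k.succAbove j) = 1 - p k := by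
    rw [← hsum, Fin.sum_univ_succAbove p k]
    ring
  have hb : -1 < (1 - p k) / p k := by
    rw [sub_div, div_self hpk.ne']
    linarith [one_div_pos.2 hpk]
  rw [pi_setOf_forall_ne_add_lt_add _ k fun i => log (p i)]
  simp_rw [stdGumbel_Iio, ← ENNReal.ofReal_prod_of_nonneg (fun _ _ => (exp_pos _).le),
    prod_exp_neg_exp_neg_add_log_sub_log _ hpk (fun j _ => hp _), hrest,
    lintegral_exp_neg_mul_exp_neg_stdGumbel hb]
  congr 1
  field_simp
  ring
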